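/- Let U and V be linear subspaces of ℝ^D with U ⊄ V and V ⊄ U. Then there exists a nonzero point u_0 ∈ U ∩ (U ∩ V)^⊥ such that the alternating-projection sequences u_k and v_k between U and V started at u_0 (v_k = Π_V u_k, u_{k+1} = Π_U v_k) satisfy ‖u_k‖ = c_F(U,V)^{2k} ‖u_0‖ and ‖v_k‖ = c_F(U,V)^{2k} ‖v_0‖ for all k. -/

import Mathlib

open scoped RealInnerProductSpace
open Metric

noncomputable section

/-- The cosine of the Friedrichs angle between two subspaces. -/
def friedrichs {H : Type*} [NormedAddCommGroup H] [InnerProductSpace ℝ H]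
    (U V : Submodule ℝ H) : ℝ :=
  sSup {t | ∃ u ∈ U ⊓ (U ⊓ V)ᗮ, ∃ v ∈ V ⊓ (U ⊓ V)ᗮ,
    ‖u‖ ≤ 1 ∧ ‖v‖ ≤ 1 ∧ t = ⟪u, v⟫}

/-!
The Friedrichs cosine `c` is the operator norm of `Π_V` restricted to `U ⊓ (U ⊓ V)ᗮ`, and
`Π_U Π_V` maps this space into itself. In finite dimension the norm is attained at a unit vector
`x₀`, which is then an eigenvector of `Π_U Π_V` for the eigenvalue `c²`: `y = Π_U Π_V x₀` has
`‖y‖ ≤ c²` while `⟪y, x₀⟫ = ‖Π_V x₀‖² = c²`, forcing equality in Cauchy–Schwarz. Started at `x₀`,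
each round of alternating projections multiplies `u_k` and `v_k` by `c²`.
-/

theorem ContinuousLinearMap.exists_norm_eq_one_and_norm_apply_eq_opNorm {E F : Type*}
    [NormedAddCommGroup E] [NormedSpace ℝ E] [FiniteDimensional ℝ E] [Nontrivial E]
    [SeminormedAddCommGroup F] [NormedSpace ℝ F] (f : E →L[ℝ] F) :
    ∃ x, ‖x‖ = 1 ∧ ‖f x‖ = ‖f‖ := by
  obtain ⟨x, hx, hmax⟩ := (isCompact_sphere (0 : E) 1).exists_isMaxOn
    (NormedSpace.sphere_nonempty.mpr zero_le_one) (continuous_norm.comp f.continuous).continuousOn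
  have hx1 : ‖x‖ = 1 := mem_sphere_zero_iff_norm.mp hx
  refine ⟨x, hx1, le_antisymm (by simpa [hx1] using f.le_opNorm x) ?_⟩
  exact f.opNorm_le_of_unit_norm (norm_nonneg _) fun y hy => hmax (mem_sphere_zero_iff_norm.mpr hy)

theorem eq_smul_of_norm_le_of_real_inner_eq {F : Type*} [NormedAddCommGroup F]
    [InnerProductSpace ℝ F] {x y : F} {a : ℝ} (hx : ‖x‖ = 1) (hy : ‖y‖ ≤ a) (hyx : ⟪y, x⟫ = a) :
    y = a • x := by
  have hya : ‖y‖ = a := le_antisymm hy (by simpa [hx, hyx] using real_inner_le_norm y x)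
  have h := inner_eq_norm_mul_iff_real.mp (by rw [hyx, hya, hx, mul_one])
  rwa [hx, hya, one_smul] at h

theorem LinearMap.alternating_seq_eq_pow_smul {R E F : Type*} [CommSemiring R] [AddCommMonoid E]
    [Module R E] [AddCommMonoid F] [Module R F] (p : E →ₗ[R] F) (q : F →ₗ[R] E) {x : E} {μ : R}
    (hx : q (p x) = μ • x) {u : ℕ → E} {v : ℕ → F} (hu0 : u 0 = x) (hv : ∀ k, v k = p (u k))
    (hu : ∀ k, u (k + 1) = q (v k)) (k : ℕ) : u k = μ ^ k • x ∧ v k = μ ^ k • v 0 := by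
  have hu_eq (k : ℕ) : u k = μ ^ k • x := by
    induction k with
    | zero => rw [hu0, pow_zero, one_smul]
    | succ k ih => rw [hu, hv, ih, map_smul, map_smul, hx, smul_smul, pow_succ]
  refine ⟨hu_eq k, ?_⟩
  rw [hv, hv, hu_eq, hu_eq, pow_zero, one_smul, map_smul]

namespace Submodule

variable {𝕜 E : Type*} [RCLike 𝕜] [NormedAddCommGroup E] [InnerProductSpace 𝕜 E]

theorem starProjection_mem_orthogonal_of_le {K V : Submodule 𝕜 E} [V.HasOrthogonalProjection]
    (hKV : K ≤ V) {x : E} (hx : x ∈ Kᗮ) : V.starProjection x ∈ Kᗮ := by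
  rw [mem_orthogonal] at hx ⊢
  intro z hz
  rw [← inner_starProjection_left_eq_right, starProjection_eq_self_iff.mpr (hKV hz)]
  exact hx z hz

theorem inf_orthogonal_inf_ne_bot {U V : Submodule 𝕜 E} [(U ⊓ V).HasOrthogonalProjection]
    (h : ¬U ≤ V) : U ⊓ (U ⊓ V)ᗮ ≠ ⊥ := by
  intro hbot
  have hU := sup_orthogonal_inf_of_hasOrthogonalProjection (inf_le_left : U ⊓ V ≤ U)
  rw [inf_comm (U ⊓ V)ᗮ, hbot, sup_bot_eq] at hU
  exact h (hU ▸ inf_le_right)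

theorem real_inner_starProjection_self {F : Type*} [NormedAddCommGroup F] [InnerProductSpace ℝ F]
    (K : Submodule ℝ F) [K.HasOrthogonalProjection] (x : F) :
    ⟪x, K.starProjection x⟫ = ‖K.starProjection x‖ ^ 2 := by
  rw [← real_inner_self_eq_norm_sq, inner_starProjection_left_eq_right,
    starProjection_eq_self_iff.mpr (starProjection_apply_mem K x)]

end Submodule

section

open Submodule

variable {H : Type*} [NormedAddCommGroup H] [InnerProductSpace ℝ H] {U V : Submodule ℝ H}

theorem friedrichs_eq_opNorm [V.HasOrthogonalProjection] :
    friedrichs U V = ‖V.starProjection ∘L (U ⊓ (U ⊓ V)ᗮ).subtypeL‖ := by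
  set S := V.starProjection ∘L (U ⊓ (U ⊓ V)ᗮ).subtypeL
  unfold friedrichs
  set A := {t | ∃ u ∈ U ⊓ (U ⊓ V)ᗮ, ∃ v ∈ V ⊓ (U ⊓ V)ᗮ, ‖u‖ ≤ 1 ∧ ‖v‖ ≤ 1 ∧ t = ⟪u, v⟫}
  have hle : ∀ t ∈ A, t ≤ ‖S‖ := by
    rintro t ⟨u, hu, v, hv, hu1, hv1, rfl⟩
    calc ⟪u, v⟫ = ⟪S ⟨u, hu⟩, v⟫ := by
          show ⟪u, v⟫ = ⟪V.starProjection u, v⟫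
          rw [inner_starProjection_left_eq_right, starProjection_eq_self_iff.mpr hv.1]
      _ ≤ ‖S ⟨u, hu⟩‖ * ‖v‖ := real_inner_le_norm _ _
      _ ≤ ‖S‖ * 1 := by
          gcongr
          exact (S.le_opNorm _).trans (mul_le_of_le_one_right (norm_nonneg _) hu1)
      _ = ‖S‖ := mul_one _
  -- witnessed by `u = w`, `v = ‖S w‖⁻¹ • S w`; the junk value `0⁻¹ = 0` covers `S w = 0`
  have hmem : ∀ w, ‖w‖ ≤ 1 → ‖S w‖ ∈ A := by
    intro w hw
    refine ⟨w, w.2, ‖S w‖⁻¹ • S w, smul_mem _ _ ⟨starProjection_apply_mem V w,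
      starProjection_mem_orthogonal_of_le inf_le_right w.2.2⟩, hw, ?_, ?_⟩
    · rw [norm_smul, norm_inv, norm_norm]
      exact inv_mul_le_one_of_le₀ le_rfl (norm_nonneg _)
    · rw [real_inner_smul_right]
      show ‖V.starProjection (w : H)‖ =
        ‖V.starProjection (w : H)‖⁻¹ * ⟪(w : H), V.starProjection w⟫
      rw [real_inner_starProjection_self, sq, ← mul_assoc, inv_mul_mul_self]
  have hbdd : BddAbove A := ⟨‖S‖, hle⟩
  refine le_antisymm (csSup_le ⟨_, hmem 0 (by simp)⟩ hle) (S.opNorm_le_of_unit_norm ?_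
    fun w hw => le_csSup hbdd (hmem w hw.le))
  exact (norm_nonneg _).trans (le_csSup hbdd (hmem 0 (by simp)))

theorem norm_starProjection_le_friedrichs_mul [V.HasOrthogonalProjection] {w : H}
    (hw : w ∈ U ⊓ (U ⊓ V)ᗮ) : ‖V.starProjection w‖ ≤ friedrichs U V * ‖w‖ := by
  rw [friedrichs_eq_opNorm]
  exact (V.starProjection ∘L (U ⊓ (U ⊓ V)ᗮ).subtypeL).le_opNorm ⟨w, hw⟩

theorem exists_norm_starProjection_eq_friedrichs [FiniteDimensional ℝ H] (h : ¬U ≤ V) :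
    ∃ x ∈ U ⊓ (U ⊓ V)ᗮ, ‖x‖ = 1 ∧ ‖V.starProjection x‖ = friedrichs U V := by
  have : Nontrivial (U ⊓ (U ⊓ V)ᗮ : Submodule ℝ H) :=
    nontrivial_iff_ne_bot.mpr (inf_orthogonal_inf_ne_bot h)
  obtain ⟨x, hx1, hx⟩ :=
    (V.starProjection ∘L (U ⊓ (U ⊓ V)ᗮ).subtypeL).exists_norm_eq_one_and_norm_apply_eq_opNorm
  exact ⟨x, x.2, hx1, hx.trans friedrichs_eq_opNorm.symm⟩

theorem starProjection_starProjection_eq_friedrichs_sq_smul [U.HasOrthogonalProjection]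
    [V.HasOrthogonalProjection] {x : H} (hx : x ∈ U ⊓ (U ⊓ V)ᗮ) (hx1 : ‖x‖ = 1)
    (hxV : ‖V.starProjection x‖ = friedrichs U V) :
    U.starProjection (V.starProjection x) = friedrichs U V ^ 2 • x := by
  set c := friedrichs U V
  set y := U.starProjection (V.starProjection x) with hy_def
  have hc : 0 ≤ c := hxV ▸ norm_nonneg _
  have hyW : y ∈ U ⊓ (U ⊓ V)ᗮ := ⟨starProjection_apply_mem U _,
    starProjection_mem_orthogonal_of_le inf_le_left
      (starProjection_mem_orthogonal_of_le inf_le_right hx.2)⟩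
  have hyx : ⟪y, x⟫ = c ^ 2 := by
    rw [hy_def, inner_starProjection_left_eq_right, starProjection_eq_self_iff.mpr hx.1,
      real_inner_comm, real_inner_starProjection_self, hxV]
  have hy_sq : ‖y‖ ^ 2 ≤ c ^ 2 * ‖y‖ :=
    calc ‖y‖ ^ 2 = ⟪U.starProjection (V.starProjection x), y⟫ := (real_inner_self_eq_norm_sq y).symm
      _ = ⟪V.starProjection x, V.starProjection y⟫ := by
        rw [inner_starProjection_left_eq_right, starProjection_eq_self_iff.mpr hyW.1,
          ← inner_starProjection_left_eq_right V,
          starProjection_eq_self_iff.mpr (starProjection_apply_mem V x)]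
      _ ≤ ‖V.starProjection x‖ * ‖V.starProjection y‖ := real_inner_le_norm _ _
      _ ≤ c * (c * ‖y‖) := by
        rw [hxV]
        exact mul_le_mul_of_nonneg_left (norm_starProjection_le_friedrichs_mul hyW) hc
      _ = c ^ 2 * ‖y‖ := by ring
  refine eq_smul_of_norm_le_of_real_inner_eq hx1 ?_ hyx
  nlinarith [norm_nonneg y, sq_nonneg c]

end

theorem stmt14_general {D : ℕ} (U V : Submodule ℝ (EuclideanSpace ℝ (Fin D)))
    (hUV : ¬U ≤ V) :
    ∃ u0 ∈ U ⊓ (U ⊓ V)ᗮ, u0 ≠ 0 ∧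
      ∀ u v : ℕ → EuclideanSpace ℝ (Fin D), u 0 = u0 →
        (∀ k, v k = (V.orthogonalProjectionOnto (u k) : EuclideanSpace ℝ (Fin D))) →
        (∀ k, u (k + 1) = (U.orthogonalProjectionOnto (v k) : EuclideanSpace ℝ (Fin D))) →
        ∀ k, ‖u k‖ = friedrichs U V ^ (2 * k) * ‖u 0‖ ∧
          ‖v k‖ = friedrichs U V ^ (2 * k) * ‖v 0‖ := by
  obtain ⟨x, hxW, hx1, hxV⟩ := exists_norm_starProjection_eq_friedrichs hUV
  refine ⟨x, hxW, norm_ne_zero_iff.mp (by simp [hx1]), fun u v hu0 hv hu k => ?_⟩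
  obtain ⟨huk, hvk⟩ := LinearMap.alternating_seq_eq_pow_smul V.starProjection.toLinearMap
    U.starProjection.toLinearMap (starProjection_starProjection_eq_friedrichs_sq_smul hxW hx1 hxV)
    hu0 hv hu k
  rw [pow_mul, huk, hvk, ← hu0, norm_smul, norm_smul, Real.norm_of_nonneg (by positivity)]
  exact ⟨rfl, rfl⟩

theorem stmt14 {D : ℕ} (U V : Submodule ℝ (EuclideanSpace ℝ (Fin D)))
    (hUV : ¬U ≤ V) (hVU : ¬V ≤ U) :
    ∃ u0 ∈ U ⊓ (U ⊓ V)ᗮ, u0 ≠ 0 ∧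
      ∀ u v : ℕ → EuclideanSpace ℝ (Fin D), u 0 = u0 →
        (∀ k, v k = (V.orthogonalProjectionOnto (u k) : EuclideanSpace ℝ (Fin D))) →
        (∀ k, u (k + 1) = (U.orthogonalProjectionOnto (v k) : EuclideanSpace ℝ (Fin D))) →
        ∀ k, ‖u k‖ = friedrichs U V ^ (2 * k) * ‖u 0‖ ∧
          ‖v k‖ = friedrichs U V ^ (2 * k) * ‖v 0‖ :=
  stmt14_general U V hUV
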